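/- Let (L,E) be a hereditary complete cotorsion pair in an abelian category A. Assume that every object of E has an L-cover in A. Then every object of A has an L-cover. -/

import Mathlib

open CategoryTheory Limits Opposite

universe w v u

namespace EnochsPaper

variable {A : Type u} [Category.{v} A]

/-- `l : X ⟶ C` is an `L`-precover of `C`. -/
def IsPrecover (L : A → Prop) {X C : A} (l : X ⟶ C) : Prop :=
  L X ∧ ∀ (X' : A), L X' → ∀ l' : X' ⟶ C, ∃ f : X' ⟶ X, f ≫ l = l'

/-- `l : X ⟶ C` is an `L`-cover. -/
def IsCover (L : A → Prop) {X C : A} (l : X ⟶ C) : Prop :=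
  IsPrecover L l ∧ ∀ e : X ⟶ X, e ≫ l = l → IsIso e

/-- The object `C` admits an `L`-cover. -/
def HasCover (L : A → Prop) (C : A) : Prop :=
  ∃ (X : A) (l : X ⟶ C), IsCover L l

variable [Abelian A] [HasExt.{w} A]

/-- `(L, E)` is a cotorsion pair: `E = L^{⊥₁}` and `L = ^{⊥₁}E` with respect to the
vanishing of `Ext¹`. -/
def IsCotorsionPair (L E : A → Prop) : Prop :=
  (∀ X : A, E X ↔ ∀ Y : A, L Y → Subsingleton (Abelian.Ext Y X 1)) ∧
  (∀ Y : A, L Y ↔ ∀ X : A, E X → Subsingleton (Abelian.Ext Y X 1))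

/-- The cotorsion pair `(L, E)` is hereditary: `Extⁿ(L, E) = 0` for all `n ≥ 1`. -/
def IsHereditaryPair (L E : A → Prop) : Prop :=
  ∀ Y X : A, L Y → E X → ∀ n : ℕ, 1 ≤ n → Subsingleton (Abelian.Ext Y X n)

/-- An epimorphism `l : X ⟶ C` with `X ∈ L` and `ker l ∈ L^{⊥₁}` is a special
`L`-precover. -/
def IsSpecialPrecover (L : A → Prop) {X C : A} (l : X ⟶ C) : Prop :=
  L X ∧ Epi l ∧ ∀ Y : A, L Y → Subsingleton (Abelian.Ext Y (kernel l) 1)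

/-- A monomorphism `b : C ⟶ X` with `X ∈ E` and `coker b ∈ ^{⊥₁}E` is a special
`E`-preenvelope. -/
def IsSpecialPreenvelope (E : A → Prop) {C X : A} (b : C ⟶ X) : Prop :=
  E X ∧ Mono b ∧ ∀ Z : A, E Z → Subsingleton (Abelian.Ext (cokernel b) Z 1)

/-- A cotorsion pair is complete if every object has a special `L`-precover and a
special `E`-preenvelope. -/
def IsCompleteCotorsionPair (L E : A → Prop) : Prop :=
  IsCotorsionPair L E ∧
    (∀ C : A, ∃ (X : A) (l : X ⟶ C), IsSpecialPrecover L l) ∧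
    (∀ C : A, ∃ (X : A) (b : C ⟶ X), IsSpecialPreenvelope E b)

/- Auxiliary lemma: transfer of `Ext`-vanishing along a retract in the first variable. -/
lemma ext_subsingleton_of_retract {D D' : A} (ρ : D ⟶ D') (σ : D' ⟶ D)
    (h : ρ ≫ σ = 𝟙 D) {Z : A} {n : ℕ}
    (hsub : Subsingleton (Abelian.Ext D' Z n)) :
    Subsingleton (Abelian.Ext D Z n) := by
  refine ⟨fun x y => ?_⟩
  have hx : x = (Abelian.Ext.mk₀ ρ).comp ((Abelian.Ext.mk₀ σ).comp x (zero_add n)) (zero_add n) := by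
    rw [Abelian.Ext.mk₀_comp_mk₀_assoc, h, Abelian.Ext.mk₀_id_comp]
  have hy : y = (Abelian.Ext.mk₀ ρ).comp ((Abelian.Ext.mk₀ σ).comp y (zero_add n)) (zero_add n) := by
    rw [Abelian.Ext.mk₀_comp_mk₀_assoc, h, Abelian.Ext.mk₀_id_comp]
  rw [hx, hy, hsub.elim ((Abelian.Ext.mk₀ σ).comp x (zero_add n))
    ((Abelian.Ext.mk₀ σ).comp y (zero_add n))]

omit [HasExt.{w} A] in
/-- The pushout of a short exact sequence along any morphism is short exact. -/
lemma pushout_shortExact {X Y Z : A} (f : X ⟶ Y) [Mono f] (c : X ⟶ Z) :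
    (ShortComplex.mk (pushout.inr f c)
      (pushout.desc (cokernel.π f) 0 (by simp))
      (pushout.inr_desc _ _ _)).ShortExact := by
  refine ShortComplex.ShortExact.mk' ?_ (Abelian.mono_pushout_of_mono_f f c)
    (epi_of_epi_fac (pushout.inl_desc (cokernel.π f) 0 (by simp)))
  refine Abelian.Pseudoelement.exact_of_pseudo_exact _ (fun u hu => ?_)
  set πU := Abelian.BiproductToPushoutIsCokernel.biproductToPushout f c with hπU
  haveI hπUepi : Epi πU :=
    epi_of_isColimit_cofork (Abelian.BiproductToPushoutIsCokernel.isColimitBiproductToPushout f c)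
  obtain ⟨w, hw⟩ := Abelian.Pseudoelement.pseudo_surjective_of_epi πU u
  have hcomp : πU ≫ pushout.desc (cokernel.π f) 0 (by simp) =
      (biprod.fst : Y ⊞ Z ⟶ Y) ≫ cokernel.π f := by
    apply biprod.hom_ext'
    · simp [hπU]; exact pushout.inl_desc _ _ _
    · simp [hπU]; exact pushout.inr_desc _ _ _
  have h1 : Abelian.Pseudoelement.pseudoApply (cokernel.π f)
      (Abelian.Pseudoelement.pseudoApply (biprod.fst : Y ⊞ Z ⟶ Y) w) = 0 := by
    rw [← Abelian.Pseudoelement.comp_apply, ← hcomp,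
      Abelian.Pseudoelement.comp_apply, hw, hu]
  have hfses : (ShortComplex.mk f (cokernel.π f) (cokernel.condition f)).Exact :=
    ShortComplex.exact_of_g_is_cokernel _ (cokernelIsCokernel f)
  obtain ⟨x, hx⟩ := Abelian.Pseudoelement.pseudo_exact_of_exact hfses _ h1
  have hfsteq : Abelian.Pseudoelement.pseudoApply (biprod.fst : Y ⊞ Z ⟶ Y) w =
      Abelian.Pseudoelement.pseudoApply (biprod.fst : Y ⊞ Z ⟶ Y)
        (Abelian.Pseudoelement.pseudoApply (biprod.lift f (-c)) x) := by
    rw [← Abelian.Pseudoelement.comp_apply, biprod.lift_fst, hx]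
  obtain ⟨s, hs0, hs⟩ :=
    Abelian.Pseudoelement.sub_of_eq_image (biprod.fst : Y ⊞ Z ⟶ Y) w _ hfsteq
  have hcof : biprod.lift f (-c) ≫ πU = 0 := by
    rw [hπU]
    rw [biprod.lift_desc]
    simp [pushout.condition]
  have hπa : Abelian.Pseudoelement.pseudoApply πU
      (Abelian.Pseudoelement.pseudoApply (biprod.lift f (-c)) x) = 0 := by
    rw [← Abelian.Pseudoelement.comp_apply, hcof]
    exact Abelian.Pseudoelement.zero_apply _ x
  have hsu : Abelian.Pseudoelement.pseudoApply πU s = u := by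
    rw [hs _ πU hπa, hw]
  have hsplitting : (ShortComplex.mk (biprod.inr : Z ⟶ Y ⊞ Z) (biprod.fst : Y ⊞ Z ⟶ Y)
      (by simp)).Splitting :=
    { r := biprod.snd
      s := biprod.inl
      f_r := by simp
      s_g := by simp
      id := by rw [add_comm]; exact biprod.total }
  obtain ⟨z, hz⟩ := Abelian.Pseudoelement.pseudo_exact_of_exact hsplitting.exact s hs0
  refine ⟨z, ?_⟩
  have hinr : (biprod.inr : Z ⟶ Y ⊞ Z) ≫ πU = pushout.inr f c := by simp [hπU]
  show Abelian.Pseudoelement.pseudoApply (pushout.inr f c) z = u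
  rw [← hinr, Abelian.Pseudoelement.comp_apply, hz, hsu]

/-- Let `(L, E)` be a hereditary complete cotorsion pair in an abelian
category `A`. If every object of `E` has an `L`-cover, then every object of `A` has an
`L`-cover. -/
theorem covers_of_covers_on_E (L E : A → Prop)
    (hcomplete : IsCompleteCotorsionPair L E) (hhered : IsHereditaryPair L E)
    (hcov : ∀ C : A, E C → HasCover L C) :
    ∀ C : A, HasCover L C := by
  obtain ⟨⟨hE, hL⟩, hprec, hpre⟩ := hcomplete
  intro C
  -- special `E`-preenvelope of `C`
  obtain ⟨G, b, hGE, hbmono, hcokb⟩ := hpre C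
  haveI : Mono b := hbmono
  -- an `L`-cover of `G`
  obtain ⟨F, φ, ⟨⟨hFL, hφprec⟩, hφcov⟩⟩ := hcov G hGE
  -- `φ` is an epimorphism, since a special precover (which is epi) factors through it
  obtain ⟨X₀, ψ, hX₀L, hψepi, -⟩ := hprec G
  haveI : Epi ψ := hψepi
  obtain ⟨h₀, hh₀⟩ := hφprec X₀ hX₀L ψ
  haveI hφepi : Epi φ := epi_of_epi_fac hh₀
  -- the pullback of `φ` along `b`
  let P : A := pullback φ b
  let i : P ⟶ F := pullback.fst φ b
  let p : P ⟶ C := pullback.snd φ b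
  haveI : Mono i := pullback.fst_of_mono
  haveI : Epi p := Abelian.epi_pullback_of_epi_f φ b
  have hcond : i ≫ φ = p ≫ b := pullback.condition
  -- `cokernel b ∈ L`
  have hLcokb : L (cokernel b) := (hL _).2 hcokb
  -- `cokernel i` is isomorphic to `cokernel b`
  have hkφ : kernel.ι φ ≫ φ = (0 : kernel φ ⟶ C) ≫ b := by simp
  have hkerπ : kernel.ι φ ≫ cokernel.π i = 0 := by
    have hlift : pullback.lift (kernel.ι φ) 0 hkφ ≫ i = kernel.ι φ := pullback.lift_fst _ _ _
    rw [← hlift, Category.assoc, cokernel.condition, comp_zero]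
  have hφw : φ ≫ Abelian.epiDesc φ (cokernel.π i) hkerπ = cokernel.π i :=
    Abelian.comp_epiDesc _ _ _
  have hbw : b ≫ Abelian.epiDesc φ (cokernel.π i) hkerπ = 0 := by
    rw [← cancel_epi p, comp_zero, ← Category.assoc, ← hcond, Category.assoc, hφw,
      cokernel.condition]
  let ν : cokernel b ⟶ cokernel i := cokernel.desc b _ hbw
  have hiφπ : i ≫ φ ≫ cokernel.π b = 0 := by
    rw [← Category.assoc, hcond, Category.assoc, cokernel.condition, comp_zero]
  let μ : cokernel i ⟶ cokernel b := cokernel.desc i (φ ≫ cokernel.π b) hiφπ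
  have hμν : μ ≫ ν = 𝟙 (cokernel i) := by
    rw [← cancel_epi (cokernel.π i)]
    rw [← Category.assoc, cokernel.π_desc, Category.assoc, cokernel.π_desc, Category.comp_id]
    exact hφw
  -- `cokernel i ∈ L`
  have hLD : L (cokernel i) := by
    rw [hL]
    intro Z hZ
    exact ext_subsingleton_of_retract μ ν hμν ((hL _).1 hLcokb Z hZ)
  -- the short exact sequence `0 → P → F → cokernel i → 0`
  have hS₀ : (ShortComplex.mk i (cokernel.π i) (cokernel.condition i)).ShortExact :=
    ShortComplex.ShortExact.mk'
      (ShortComplex.exact_of_g_is_cokernel _ (cokernelIsCokernel i))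
      ‹Mono i› inferInstance
  -- `P ∈ L`
  have hLP : L P := by
    rw [hL]
    intro Z hZ
    haveI h1 : Subsingleton (Abelian.Ext F Z 1) := (hL F).1 hFL Z hZ
    haveI h2 : Subsingleton (Abelian.Ext (cokernel i) Z 2) :=
      hhered _ _ hLD hZ 2 (by norm_num)
    refine ⟨fun x y => ?_⟩
    obtain ⟨x₂, hx₂⟩ :=
      Abelian.Ext.contravariant_sequence_exact₁ hS₀ Z x rfl (Subsingleton.elim _ _)
    obtain ⟨y₂, hy₂⟩ :=
      Abelian.Ext.contravariant_sequence_exact₁ hS₀ Z y rfl (Subsingleton.elim _ _)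
    rw [← hx₂, ← hy₂, Subsingleton.elim x₂ y₂]
  refine ⟨P, p, ⟨hLP, ?_⟩, ?_⟩
  · -- `p` is an `L`-precover
    intro X' hX' l'
    obtain ⟨h', hh'⟩ := hφprec X' hX' (l' ≫ b)
    exact ⟨pullback.lift h' l' hh', pullback.lift_snd _ _ _⟩
  · -- `p` is an `L`-cover
    intro e he
    have hdφ : (i - e ≫ i) ≫ φ = 0 := by
      rw [Preadditive.sub_comp, Category.assoc, hcond, ← Category.assoc, he, sub_self]
    set d : P ⟶ F := i - e ≫ i with hd
    -- the pushout `V` of `i` and `d`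
    have hS' := pushout_shortExact i d
    -- `V ∈ L`
    have hLV : L (pushout i d) := by
      rw [hL]
      intro Z hZ
      haveI h1 : Subsingleton (Abelian.Ext F Z 1) := (hL F).1 hFL Z hZ
      haveI hD1 : Subsingleton (Abelian.Ext (cokernel i) Z 1) := (hL _).1 hLD Z hZ
      refine ⟨fun x y => ?_⟩
      obtain ⟨x₁, hx₁⟩ :=
        Abelian.Ext.contravariant_sequence_exact₂ hS' Z x (Subsingleton.elim _ _)
      obtain ⟨y₁, hy₁⟩ :=
        Abelian.Ext.contravariant_sequence_exact₂ hS' Z y (Subsingleton.elim _ _)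
      rw [← hx₁, ← hy₁, Subsingleton.elim x₁ y₁]
    -- a map `V ⟶ G` which is `0` on the first copy of `F` and `φ` on the second
    have hig : i ≫ (0 : F ⟶ G) = d ≫ φ := by rw [comp_zero, hdφ]
    obtain ⟨t, ht⟩ := hφprec (pushout i d) hLV (pushout.desc 0 φ hig)
    -- `u` is an automorphism of `F` over `G`
    have hu : (pushout.inr i d ≫ t) ≫ φ = φ := by
      rw [Category.assoc, ht, pushout.inr_desc]
    haveI hui : IsIso (pushout.inr i d ≫ t) := hφcov _ hu
    have huinvφ : inv (pushout.inr i d ≫ t) ≫ φ = φ := by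
      rw [IsIso.inv_comp_eq, hu]
    -- `v : F ⟶ F` extends the "difference" `d` over `i`
    have hvφ : (pushout.inl i d ≫ t ≫ inv (pushout.inr i d ≫ t)) ≫ φ = 0 := by
      simp only [Category.assoc]
      rw [huinvφ, ht, pushout.inl_desc]
    have hiv : i ≫ pushout.inl i d ≫ t ≫ inv (pushout.inr i d ≫ t) = d := by
      have h1 : i ≫ pushout.inl i d ≫ t ≫ inv (pushout.inr i d ≫ t)
          = (i ≫ pushout.inl i d) ≫ t ≫ inv (pushout.inr i d ≫ t) := by
        simp only [Category.assoc]
      rw [h1, pushout.condition]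
      have h2 : (d ≫ pushout.inr i d) ≫ t ≫ inv (pushout.inr i d ≫ t)
          = d ≫ (pushout.inr i d ≫ t) ≫ inv (pushout.inr i d ≫ t) := by
        simp only [Category.assoc]
      rw [h2, IsIso.hom_inv_id, Category.comp_id]
    set v : F ⟶ F := pushout.inl i d ≫ t ≫ inv (pushout.inr i d ≫ t) with hv
    -- `𝟙 F - v` is an automorphism of `F` over `G`
    have hetφ : (𝟙 F - v) ≫ φ = φ := by
      rw [Preadditive.sub_comp, Category.id_comp, hvφ, sub_zero]
    haveI : IsIso (𝟙 F - v) := hφcov _ hetφ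
    have hie : i ≫ (𝟙 F - v) = e ≫ i := by
      rw [Preadditive.comp_sub, Category.comp_id, hiv, hd, sub_sub_cancel]
    have hinvet : inv (𝟙 F - v) ≫ φ = φ := by
      rw [IsIso.inv_comp_eq, hetφ]
    -- constructing the inverse of `e`
    have hlift : (i ≫ inv (𝟙 F - v)) ≫ φ = p ≫ b := by
      rw [Category.assoc, hinvet, hcond]
    have he'i : pullback.lift (i ≫ inv (𝟙 F - v)) p hlift ≫ i = i ≫ inv (𝟙 F - v) :=
      pullback.lift_fst _ _ _
    have he'p : pullback.lift (i ≫ inv (𝟙 F - v)) p hlift ≫ p = p :=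
      pullback.lift_snd _ _ _
    refine ⟨⟨pullback.lift (i ≫ inv (𝟙 F - v)) p hlift, ?_, ?_⟩⟩
    · -- `e ≫ e' = 𝟙`
      refine pullback.hom_ext ?_ ?_
      · show (e ≫ pullback.lift (i ≫ inv (𝟙 F - v)) p hlift) ≫ i = 𝟙 P ≫ i
        rw [Category.assoc, he'i, ← Category.assoc, ← hie, Category.assoc,
          IsIso.hom_inv_id, Category.comp_id, Category.id_comp]
      · show (e ≫ pullback.lift (i ≫ inv (𝟙 F - v)) p hlift) ≫ p = 𝟙 P ≫ p
        rw [Category.assoc, he'p, he, Category.id_comp]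
    · -- `e' ≫ e = 𝟙`
      refine pullback.hom_ext ?_ ?_
      · show (pullback.lift (i ≫ inv (𝟙 F - v)) p hlift ≫ e) ≫ i = 𝟙 P ≫ i
        rw [Category.assoc, ← hie, ← Category.assoc, he'i, Category.assoc,
          IsIso.inv_hom_id, Category.comp_id, Category.id_comp]
      · show (pullback.lift (i ≫ inv (𝟙 F - v)) p hlift ≫ e) ≫ p = 𝟙 P ≫ p
        rw [Category.assoc, he, he'p, Category.id_comp]

end EnochsPaper
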